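/- Let A be an F_p-algebra and (M, ξ), (N, η) pairs of A-modules with p-nilpotent A-linear endomorphisms. Under the correspondence sending (M, ξ) to the comodule (M, exp(ξε)), the tensor product comodule M ⊗_A N corresponds to the endomorphism ξ ⊗ id_N + id_M ⊗ η of M ⊗_A N; in particular (ξ ⊗ id + id ⊗ η)^p = 0 and exp((ξ⊗id + id⊗η)ε) = (exp(ξε) ⊗ exp(ηε)) composed with multiplication in A[ε]/(ε^p). -/

import Mathlib

/-! `ζ` is the sum of the commuting operators `ξ ⊗ 1` and `1 ⊗ η`, so in characteristic `p` its
`p`-th power is `ξ ^ p ⊗ 1 + 1 ⊗ η ^ p = 0`. For the coaction, expand `ζ ^ k (m ⊗ n)` by the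
binomial theorem: since `(i + j).choose i / (i + j)! = (1 / i!) * (1 / j!)` for `i + j < p` and
`ε ^ (i + j) = 0` for `i + j ≥ p`, the truncated exponential of `ζ ε` is the product of those of
`ξ ε` and `η ε`. -/

open Polynomial TensorProduct

noncomputable section

/-- `A[ε] = A[x]/(x^p)`. -/
abbrev Aeps (p : ℕ) (A : Type*) [CommRing A] : Type _ :=
  AdjoinRoot ((X : A[X]) ^ p)

/-- The class of `x`, i.e. `ε`. -/
def eps (p : ℕ) (A : Type*) [CommRing A] : Aeps p A := AdjoinRoot.root _

/-- The inverse of `i!` in `A` (through `ℤ/p`). -/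
def invFact (p : ℕ) (A : Type*) [CommRing A] [CharP A p] (i : ℕ) : A :=
  ZMod.castHom (dvd_refl p) A ((i.factorial : ZMod p)⁻¹)

/-- The coaction `exp(ξ ε) : M → M ⊗ A[ε]/(ε^p)`, `m ↦ ∑ ξ^i(m)/i! ⊗ ε^i`. -/
def expCoact (p : ℕ) (A : Type*) [CommRing A] [CharP A p]
    {M : Type*} [AddCommGroup M] [Module A M] (ξ : Module.End A M) :
    M →ₗ[A] M ⊗[A] Aeps p A :=
  ∑ i ∈ Finset.range p,
    invFact p A i • ((TensorProduct.mk A M (Aeps p A)).flip ((eps p A) ^ i) ∘ₗ (ξ ^ i))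

open Finset

lemma Finset.sum_range_sum_antidiagonal_eq_sum_range_sum_range {β : Type*} [AddCommMonoid β]
    (n : ℕ) (g : ℕ → ℕ → β) (hg : ∀ i j, n ≤ i + j → g i j = 0) :
    ∑ k ∈ range n, ∑ ij ∈ antidiagonal k, g ij.1 ij.2 = ∑ i ∈ range n, ∑ j ∈ range n, g i j := by
  classical
  have hfiber : ∀ k ∈ range n,
      {ij ∈ {ij ∈ range n ×ˢ range n | ij.1 + ij.2 < n} | ij.1 + ij.2 = k} = antidiagonal k := by
    intro k hk
    ext ⟨i, j⟩
    simp only [mem_range] at hk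
    simp only [mem_filter, mem_product, mem_range, HasAntidiagonal.mem_antidiagonal]
    omega
  calc ∑ k ∈ range n, ∑ ij ∈ antidiagonal k, g ij.1 ij.2
      = ∑ k ∈ range n, ∑ ij ∈ {ij ∈ range n ×ˢ range n | ij.1 + ij.2 < n} with ij.1 + ij.2 = k,
          g ij.1 ij.2 := sum_congr rfl fun k hk => by rw [hfiber k hk]
    _ = ∑ ij ∈ range n ×ˢ range n with ij.1 + ij.2 < n, g ij.1 ij.2 :=
        sum_fiberwise_of_maps_to (fun ij hij => mem_range.2 (mem_filter.1 hij).2) _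
    _ = ∑ ij ∈ range n ×ˢ range n, g ij.1 ij.2 :=
        sum_filter_of_ne fun ij _ h => lt_of_not_ge fun hle => h (hg _ _ hle)
    _ = ∑ i ∈ range n, ∑ j ∈ range n, g i j := sum_product _ _ _

lemma Commute.add_pow_prime_eq_of_natCast_eq_zero {R : Type*} [Semiring R] {p : ℕ}
    (hp : p.Prime) {x y : R} (h : Commute x y) (hR : (p : R) = 0) :
    (x + y) ^ p = x ^ p + y ^ p := by
  rw [h.add_pow_prime_eq hp, hR, zero_mul, zero_mul, zero_mul, add_zero]

lemma eps_pow_eq_zero_of_le {p : ℕ} (A : Type*) [CommRing A] {k : ℕ} (h : p ≤ k) :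
    eps p A ^ k = 0 := by
  rw [eps, ← AdjoinRoot.mk_X, ← map_pow, AdjoinRoot.mk_eq_zero]
  exact pow_dvd_pow X h

lemma invFact_mul_invFact {p : ℕ} [Fact p.Prime] (A : Type*) [CommRing A] [CharP A p]
    {i j : ℕ} (h : i + j < p) :
    invFact p A i * invFact p A j = ((i + j).choose i : A) * invFact p A (i + j) := by
  have factorial_ne_zero : ∀ {k : ℕ}, k < p → (k.factorial : ZMod p) ≠ 0 := fun hk => by
    rw [Ne, ZMod.natCast_eq_zero_iff, (Fact.out : p.Prime).dvd_factorial]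
    omega
  have hi := factorial_ne_zero (k := i) (by omega)
  have hj := factorial_ne_zero (k := j) (by omega)
  have hij := factorial_ne_zero h
  have key : (i.factorial : ZMod p)⁻¹ * (j.factorial : ZMod p)⁻¹ =
      (i + j).choose i * ((i + j).factorial : ZMod p)⁻¹ := by
    rw [Nat.choose_symm_add, ← Nat.add_choose_mul_factorial_mul_factorial i j] at *
    push_cast at hij ⊢
    have hc := left_ne_zero_of_mul (left_ne_zero_of_mul hij)
    field_simp
  rw [invFact, invFact, invFact, ← map_mul, key, map_mul, map_natCast]

section TensorEnd

variable {R M N : Type*} [CommSemiring R] [AddCommMonoid M] [Module R M] [AddCommMonoid N]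
  [Module R N]

lemma LinearMap.commute_rTensor_lTensor (f : Module.End R M) (g : Module.End R N) :
    Commute (f.rTensor N) (g.lTensor M) := by
  change _ ∘ₗ _ = _ ∘ₗ _
  rw [LinearMap.rTensor_comp_lTensor, LinearMap.lTensor_comp_rTensor]

lemma LinearMap.rTensor_add_lTensor_pow_tmul (f : Module.End R M) (g : Module.End R N) (k : ℕ)
    (m : M) (n : N) :
    ((f.rTensor N + g.lTensor M) ^ k) (m ⊗ₜ n) =
      ∑ ij ∈ antidiagonal k, k.choose ij.1 • ((f ^ ij.1) m ⊗ₜ (g ^ ij.2) n) := by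
  rw [(commute_rTensor_lTensor f g).add_pow', LinearMap.sum_apply]
  refine sum_congr rfl fun ij _ => ?_
  rw [LinearMap.smul_apply, Module.End.mul_apply, rTensor_pow, lTensor_pow, lTensor_tmul,
    rTensor_tmul]

lemma LinearMap.rTensor_add_lTensor_pow_eq_zero {p : ℕ} [Fact p.Prime] [CharP R p]
    {f : Module.End R M} {g : Module.End R N} (hf : f ^ p = 0) (hg : g ^ p = 0) :
    (f.rTensor N + g.lTensor M) ^ p = 0 := by
  have hchar : (p : Module.End R (M ⊗[R] N)) = 0 := by
    rw [← map_natCast (algebraMap R _), CharP.cast_eq_zero, map_zero]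
  rw [(commute_rTensor_lTensor f g).add_pow_prime_eq_of_natCast_eq_zero Fact.out hchar,
    rTensor_pow, lTensor_pow, hf, hg, rTensor_zero, lTensor_zero, add_zero]

end TensorEnd

section ExpCoaction

variable {p : ℕ} {A M N : Type*} [CommRing A] [CharP A p] [AddCommGroup M] [Module A M]
  [AddCommGroup N] [Module A N]

lemma expCoact_apply (ξ : Module.End A M) (x : M) :
    expCoact p A ξ x = ∑ i ∈ range p, invFact p A i • ((ξ ^ i) x ⊗ₜ (eps p A ^ i)) := by
  simp [expCoact]

lemma expCoact_rTensor_add_lTensor_tmul [Fact p.Prime] (ξ : Module.End A M)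
    (η : Module.End A N) (m : M) (n : N) :
    expCoact p A (ξ.rTensor N + η.lTensor M) (m ⊗ₜ n) =
      ∑ i ∈ range p, ∑ j ∈ range p,
        (invFact p A i * invFact p A j) • (((ξ ^ i) m ⊗ₜ (η ^ j) n) ⊗ₜ (eps p A ^ (i + j))) := by
  rw [expCoact_apply, ← sum_range_sum_antidiagonal_eq_sum_range_sum_range p _
    fun i j h => by rw [eps_pow_eq_zero_of_le A h, tmul_zero, smul_zero]]
  refine sum_congr rfl fun k hk => ?_
  rw [LinearMap.rTensor_add_lTensor_pow_tmul, sum_tmul, smul_sum]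
  refine sum_congr rfl fun ij hij => ?_
  rw [HasAntidiagonal.mem_antidiagonal] at hij
  rw [invFact_mul_invFact A (hij ▸ mem_range.1 hk), hij, ← Nat.cast_smul_eq_nsmul A,
    ← smul_tmul', smul_smul, mul_comm]

lemma tensorTensorTensorComm_map_expCoact_tmul (ξ : Module.End A M) (η : Module.End A N)
    (m : M) (n : N) :
    (LinearMap.lTensor (M ⊗[A] N) (LinearMap.mul' A (Aeps p A)) ∘ₗ
        (tensorTensorTensorComm A M (Aeps p A) N (Aeps p A)).toLinearMap ∘ₗ
          map (expCoact p A ξ) (expCoact p A η)) (m ⊗ₜ n) =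
      ∑ i ∈ range p, ∑ j ∈ range p,
        (invFact p A i * invFact p A j) • (((ξ ^ i) m ⊗ₜ (η ^ j) n) ⊗ₜ (eps p A ^ (i + j))) := by
  simp only [LinearMap.comp_apply, map_tmul, expCoact_apply, sum_tmul, tmul_sum, map_sum]
  rw [sum_comm]
  refine sum_congr rfl fun i _ => sum_congr rfl fun j _ => ?_
  rw [tmul_smul, ← smul_tmul', map_smul, map_smul, map_smul, map_smul, smul_smul,
    mul_comm (invFact p A j), LinearEquiv.coe_coe, tensorTensorTensorComm_tmul,
    LinearMap.lTensor_tmul, LinearMap.mul'_apply, pow_add]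

end ExpCoaction

/-- Under the correspondence `(M, ξ) ↦ (M, exp(ξε))`, the tensor product comodule
`M ⊗ N` corresponds to `ζ = ξ ⊗ id + id ⊗ η`: this `ζ` is again `p`-nilpotent and
`exp(ζε)` equals `exp(ξε) ⊗ exp(ηε)` followed by reshuffling and multiplication in
`A[ε]/(ε^p)`. -/
theorem stmt11 (p : ℕ) [Fact p.Prime] (A : Type*) [CommRing A] [CharP A p]
    (M N : Type*) [AddCommGroup M] [Module A M] [AddCommGroup N] [Module A N]
    (ξ : Module.End A M) (η : Module.End A N) (hξ : ξ ^ p = 0) (hη : η ^ p = 0)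
    (ζ : Module.End A (M ⊗[A] N))
    (hζ : ζ = LinearMap.rTensor N ξ + LinearMap.lTensor M η) :
    ζ ^ p = 0 ∧
      expCoact p A ζ =
        LinearMap.lTensor (M ⊗[A] N) (LinearMap.mul' A (Aeps p A)) ∘ₗ
          (TensorProduct.tensorTensorTensorComm A M (Aeps p A) N
              (Aeps p A)).toLinearMap ∘ₗ
            TensorProduct.map (expCoact p A ξ) (expCoact p A η) := by
  subst hζ
  refine ⟨LinearMap.rTensor_add_lTensor_pow_eq_zero hξ hη, ext' fun m n => ?_⟩
  rw [expCoact_rTensor_add_lTensor_tmul, tensorTensorTensorComm_map_expCoact_tmul]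

end
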